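/- Let F(r) = r ln r + (1-r) ln(1-r) for r ∈ (0,1). Then for every compact interval K ⊂ (0,1) there exist constants c_K, C_K > 0 such that c_K |F'(r)| ≤ F'(r)(r - r₀) + C_K for all r ∈ (0,1) and all r₀ ∈ K. -/

import Mathlib

open Real Set

/-- Property P1 for the scalar logarithmic potential `F(r) = r ln r + (1-r) ln(1-r)`,
whose derivative is `F'(r) = ln r - ln (1-r)`: for every compact `K ⊂ (0,1)` there
are `c_K, C_K > 0` with `c_K |F'(r)| ≤ F'(r)(r - r₀) + C_K` for all `r ∈ (0,1)`,
`r₀ ∈ K`. -/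
theorem flory_huggins_property_P1 (K : Set ℝ) (hK : IsCompact K)
    (hKsub : K ⊆ Set.Ioo (0:ℝ) 1) :
    ∃ cK > (0:ℝ), ∃ CK > (0:ℝ), ∀ r ∈ Set.Ioo (0:ℝ) 1, ∀ r₀ ∈ K,
      cK * |Real.log r - Real.log (1 - r)| ≤
        (Real.log r - Real.log (1 - r)) * (r - r₀) + CK := by
  rcases K.eq_empty_or_nonempty with hemp | hne
  · exact ⟨1, one_pos, 1, one_pos, fun r _ r₀ hr₀ => absurd hr₀ (by simp [hemp])⟩
  set a := sInf K with ha_def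
  set b := sSup K with hb_def
  have haK : a ∈ K := hK.sInf_mem hne
  have hbK : b ∈ K := hK.sSup_mem hne
  obtain ⟨ha0, ha1⟩ := hKsub haK
  obtain ⟨hb0, hb1⟩ := hKsub hbK
  have hab : a ≤ b := csInf_le_csSup hne hK.bddBelow hK.bddAbove
  set c := min a (1 - b) / 2 with hc_def
  have hc0 : 0 < c := by
    have : 0 < min a (1 - b) := lt_min ha0 (by linarith)
    positivity
  set M := (Real.log ((1 + b) / 2) - Real.log ((1 - b) / 2)) +
      (Real.log (1 - a / 2) - Real.log (a / 2)) + 1 with hM_def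
  have hM1 : 1 ≤ M := by
    have h1 : Real.log ((1 - b) / 2) ≤ Real.log ((1 + b) / 2) :=
      Real.log_le_log (by linarith) (by linarith)
    have h2 : Real.log (a / 2) ≤ Real.log (1 - a / 2) :=
      Real.log_le_log (by linarith) (by linarith)
    simp only [hM_def]; linarith
  clear_value c M
  refine ⟨c, hc0, c * M + M + 1, by nlinarith, ?_⟩
  rintro r ⟨hr0, hr1⟩ r₀ hr₀
  have har₀ : a ≤ r₀ := by rw [ha_def]; exact csInf_le hK.bddBelow hr₀
  have hbr₀ : r₀ ≤ b := by rw [hb_def]; exact le_csSup hK.bddAbove hr₀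
  obtain ⟨hr₀0, hr₀1⟩ := hKsub hr₀
  set f := Real.log r - Real.log (1 - r) with hf_def
  have hca : c ≤ a / 2 := by
    have := min_le_left a (1 - b); simp only [hc_def]; linarith
  have hcb : c ≤ (1 - b) / 2 := by
    have := min_le_right a (1 - b); simp only [hc_def]; linarith
  rcases le_or_gt r (a / 2) with h1 | h1
  · -- f ≤ 0, r₀ - r ≥ a/2 ≥ c
    have hf_neg : f ≤ 0 := by
      have : Real.log r ≤ Real.log (1 - r) :=
        Real.log_le_log hr0 (by linarith)
      simp only [hf_def]; linarith
    have habs : |f| = -f := abs_of_nonpos hf_neg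
    have hdist : c ≤ r₀ - r := by linarith
    have key : c * (-f) ≤ (-f) * (r₀ - r) := by
      nlinarith [neg_nonneg.mpr hf_neg]
    rw [habs]
    nlinarith
  rcases le_or_gt ((1 + b) / 2) r with h2 | h2
  · -- f ≥ 0, r - r₀ ≥ (1-b)/2 ≥ c
    have hf_pos : 0 ≤ f := by
      have : Real.log (1 - r) ≤ Real.log r :=
        Real.log_le_log (by linarith) (by linarith)
      simp only [hf_def]; linarith
    have habs : |f| = f := abs_of_nonneg hf_pos
    have hdist : c ≤ r - r₀ := by linarith
    have key : c * f ≤ f * (r - r₀) := by nlinarith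
    rw [habs]
    nlinarith
  · -- middle range: |f| ≤ M
    have hup : f ≤ M := by
      have hu1 : Real.log r ≤ Real.log ((1 + b) / 2) :=
        Real.log_le_log hr0 (le_of_lt h2)
      have hu2 : Real.log ((1 - b) / 2) ≤ Real.log (1 - r) :=
        Real.log_le_log (by linarith) (by linarith)
      have h3 : Real.log (a / 2) ≤ Real.log (1 - a / 2) :=
        Real.log_le_log (by positivity) (by linarith)
      simp only [hf_def, hM_def]; linarith
    have hlo : -M ≤ f := by
      have hu1 : Real.log (a / 2) ≤ Real.log r :=
        Real.log_le_log (by positivity) (le_of_lt h1)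
      have hu2 : Real.log (1 - r) ≤ Real.log (1 - a / 2) :=
        Real.log_le_log (by linarith) (by linarith)
      have h3 : Real.log ((1 - b) / 2) ≤ Real.log ((1 + b) / 2) :=
        Real.log_le_log (by linarith) (by linarith)
      simp only [hf_def, hM_def]; linarith
    have habsM : |f| ≤ M := abs_le.mpr ⟨hlo, hup⟩
    have hdist : |r - r₀| ≤ 1 := by
      rw [abs_le]; constructor <;> linarith
    have key : -M ≤ f * (r - r₀) := by
      have h4 : |f * (r - r₀)| ≤ M := by
        rw [abs_mul]
        calc |f| * |r - r₀| ≤ M * 1 :=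
              mul_le_mul habsM hdist (abs_nonneg _) (by linarith)
          _ = M := mul_one M
      linarith [neg_abs_le (f * (r - r₀))]
    have hcfM : c * |f| ≤ c * M := mul_le_mul_of_nonneg_left habsM hc0.le
    linarith
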